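/- Let f ∈ ℝ[X] be a nonzero squarefree polynomial and let A = ℝ[X]/(f), a finite-dimensional ℝ-vector space. Define the Hermite bilinear form B on A by B(p, q) = trace(L_{pq}), where L_{pq} : A → A is multiplication by pq. Then the rank of B equals the number of distinct complex roots of f (which equals deg f), and the signature of B equals the number of distinct real roots of f. -/

import Mathlib

/-!
The `n = deg f` distinct complex roots `α` of `f` give characters `ℝ[X]/(f) → ℂ`, `X ↦ α`, whose
Vandermonde matrix is invertible and simultaneously diagonalises all multiplication maps. Hence
`trace L_{X^k} = ∑ α ^ k`, and the quadratic form of `H` is `x ↦ ∑_α (∑_i x_i α ^ i) ^ 2`.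
Pairing each non-real root with its conjugate, this form is a sum of `r` squares (one per real
root) and `s` differences of two squares (one per conjugate pair) of `n = r + 2 s` independent
linear forms, so by Sylvester's law of inertia it has `r + s` positive and `s` negative
directions: it is nondegenerate of signature `r`.
-/

open Finset Matrix Module Polynomial QuadraticMap ComplexConjugate

theorem Algebra.algebraMap_trace_eq_sum_of_isUnit {K A L ι : Type*} [CommRing K] [CommRing A]
    [Algebra K A] [CommRing L] [Algebra K L] [Fintype ι] [DecidableEq ι] (b : Basis ι K A)
    (φ : ι → A →ₐ[K] L) (hφ : IsUnit (Matrix.of fun k i => φ k (b i))) (x : A) :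
    algebraMap K L (Algebra.trace K A x) = ∑ k, φ k x := by
  set V : Matrix ι ι L := Matrix.of fun k i => φ k (b i)
  set M := (Algebra.leftMulMatrix b x).map (algebraMap K L)
  have hV : IsUnit V.det := (isUnit_iff_isUnit_det V).1 hφ
  -- the rows of `V` are simultaneous left eigenvectors of multiplication by `x`
  have hVM : V * M = diagonal (fun k => φ k x) * V := by
    ext k j
    rw [diagonal_mul, mul_apply]
    simp only [V, M, of_apply, map_apply, Algebra.leftMulMatrix_eq_repr_mul]
    conv_rhs => rw [← map_mul, ← b.sum_repr (x * b j), map_sum]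
    simp only [map_smul]
    simp only [Algebra.smul_def, mul_comm]
  have hM : M = V⁻¹ * (diagonal (fun k => φ k x) * V) := by
    rw [← hVM, ← Matrix.mul_assoc, nonsing_inv_mul _ hV, Matrix.one_mul]
  rw [Algebra.trace_eq_matrix_trace b, AddMonoidHom.map_trace]
  change M.trace = _
  rw [hM, trace_mul_comm, Matrix.mul_assoc, mul_nonsing_inv _ hV, Matrix.mul_one, trace_diagonal]

theorem Polynomial.card_aroots_toFinset_eq_natDegree {K L : Type*} [Field K] [Field L]
    [Algebra K L] [DecidableEq L] {f : K[X]} (hsep : f.Separable)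
    (hspl : (f.map (algebraMap K L)).Splits) :
    #(f.aroots L).toFinset = f.natDegree := by
  simpa [rootSet_def] using card_rootSet_eq_natDegree hsep hspl

theorem AdjoinRoot.algebraMap_trace_root_pow {K L : Type*} [Field K] [Field L] [Algebra K L]
    [DecidableEq L] {f : K[X]} (hf : f ≠ 0) (hsep : f.Separable)
    (hspl : (f.map (algebraMap K L)).Splits) (m : ℕ) :
    algebraMap K L (Algebra.trace K (AdjoinRoot f) (root f ^ m)) =
      ∑ α ∈ (f.aroots L).toFinset, α ^ m := by
  set R := (f.aroots L).toFinset
  set pb := AdjoinRoot.powerBasis hf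
  have hcard : Fintype.card R = pb.dim := by
    rw [Fintype.card_coe, card_aroots_toFinset_eq_natDegree hsep hspl, powerBasis_dim]
  let e : Fin pb.dim ≃ R := (Fintype.equivFinOfCardEq hcard).symm
  have hroot (α : R) : f.eval₂ (algebraMap K L) α = 0 := by
    rw [← eval_map]
    exact (mem_roots'.1 (Multiset.mem_toFinset.1 α.2)).2
  let φ (l : Fin pb.dim) := liftAlgHom f (Algebra.ofId K L) (e l) (hroot (e l))
  have hφ (l : Fin pb.dim) (k : ℕ) : φ l (root f ^ k) = (e l : L) ^ k := by
    rw [map_pow]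
    exact congrArg (· ^ k) (liftAlgHom_root _ _ _ _)
  have hV : (Matrix.of fun l i => φ l (pb.basis i)) = vandermonde fun l => (e l : L) := by
    ext l i
    rw [of_apply, pb.basis_eq_pow, powerBasis_gen, hφ, vandermonde_apply]
  have hunit : IsUnit (Matrix.of fun l i => φ l (pb.basis i)) := by
    rw [hV, isUnit_iff_isUnit_det, isUnit_iff_ne_zero, det_vandermonde_ne_zero_iff]
    exact Subtype.val_injective.comp e.injective
  rw [Algebra.algebraMap_trace_eq_sum_of_isUnit pb.basis φ hunit]
  simp only [hφ]
  rw [e.sum_comp (fun α : R => (α : L) ^ m)]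
  exact sum_coe_sort R _

theorem LinearMap.finrank_le_finrank_ker_add_card {K V ι : Type*} [DivisionRing K]
    [AddCommGroup V] [Module K V] [FiniteDimensional K V] [Fintype ι] (T : V →ₗ[K] ι → K) :
    finrank K V ≤ finrank K (LinearMap.ker T) + Fintype.card ι := by
  have := (LinearMap.range T).finrank_le
  rw [Module.finrank_fintype_fun_eq_card] at this
  have := T.finrank_range_add_finrank_ker
  omega

theorem Finset.card_filter_im_nonneg_eq_card_filter_im_eq_zero_add (R : Finset ℂ) :
    #{α ∈ R | 0 ≤ α.im} = #{α ∈ R | α.im = 0} + #{α ∈ R | 0 < α.im} := by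
  rw [← card_union_of_disjoint (disjoint_filter.2 fun α _ h => h.symm ▸ lt_irrefl 0), ← filter_or]
  simp only [le_iff_eq_or_lt, eq_comm]

theorem Finset.card_filter_im_nonneg_add_card_filter_im_pos {R : Finset ℂ}
    (hR : ∀ α ∈ R, conj α ∈ R) :
    #{α ∈ R | 0 ≤ α.im} + #{α ∈ R | 0 < α.im} = #R := by
  have hconj : #{α ∈ R | 0 < α.im} = #{α ∈ R | ¬ 0 ≤ α.im} := by
    refine card_nbij' conj conj ?_ ?_ (fun α _ => Complex.conj_conj α)
      (fun α _ => Complex.conj_conj α)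
    all_goals
      intro α hα
      simp only [coe_filter, Set.mem_ofPred_eq, Complex.conj_im] at hα ⊢
      exact ⟨hR α hα.1, by linarith [hα.2]⟩
  rw [hconj, card_filter_add_card_filter_not]

section ConjSymmetric

variable {V : Type*} [AddCommGroup V] [Module ℝ V] {R : Finset ℂ} {ev : ℂ → V →ₗ[ℝ] ℂ}

theorem forall_im_eq_zero_of_forall_im_pos (hR : ∀ α ∈ R, conj α ∈ R)
    (hev : ∀ α x, ev (conj α) x = conj (ev α x)) {x : V}
    (h : ∀ α ∈ R, 0 < α.im → (ev α x).im = 0) : ∀ α ∈ R, (ev α x).im = 0 := by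
  intro α hα
  rcases lt_trichotomy α.im 0 with hneg | hzero | hpos
  · have := h (conj α) (hR α hα) (by rw [Complex.conj_im]; linarith)
    rwa [hev, Complex.conj_im, neg_eq_zero] at this
  · have := hev α x
    rw [Complex.conj_eq_iff_im.2 hzero] at this
    exact Complex.conj_eq_iff_im.1 this.symm
  · exact h α hα hpos

theorem forall_re_eq_zero_of_forall_im_nonneg (hR : ∀ α ∈ R, conj α ∈ R)
    (hev : ∀ α x, ev (conj α) x = conj (ev α x)) {x : V}
    (h : ∀ α ∈ R, 0 ≤ α.im → (ev α x).re = 0) : ∀ α ∈ R, (ev α x).re = 0 := by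
  intro α hα
  rcases lt_or_ge α.im 0 with hneg | hnonneg
  · have := h (conj α) (hR α hα) (by rw [Complex.conj_im]; linarith)
    rwa [hev, Complex.conj_re] at this
  · exact h α hα hnonneg

variable {Q : QuadraticForm ℝ V}

theorem QuadraticForm.eq_sum_re_sq_sub_im_sq (hQ : ∀ x, (Q x : ℂ) = ∑ α ∈ R, ev α x ^ 2) (x : V) :
    Q x = ∑ α ∈ R, ((ev α x).re ^ 2 - (ev α x).im ^ 2) := by
  rw [← Complex.ofReal_re (Q x), hQ, Complex.re_sum]
  refine sum_congr rfl fun α _ => ?_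
  rw [_root_.sq, Complex.mul_re]
  ring

theorem QuadraticForm.pos_of_forall_im_eq_zero (hinj : ∀ x, (∀ α ∈ R, ev α x = 0) → x = 0)
    (hQ : ∀ x, (Q x : ℂ) = ∑ α ∈ R, ev α x ^ 2) {x : V} (hx : x ≠ 0)
    (him : ∀ α ∈ R, (ev α x).im = 0) : 0 < Q x := by
  obtain ⟨α₀, hα₀, hne⟩ : ∃ α ∈ R, ev α x ≠ 0 := by
    by_contra! h
    exact hx (hinj x h)
  have hre : (ev α₀ x).re ≠ 0 := fun h => hne (Complex.ext h (him α₀ hα₀))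
  have hQx : Q x = ∑ α ∈ R, (ev α x).re ^ 2 := by
    rw [eq_sum_re_sq_sub_im_sq hQ]
    exact sum_congr rfl fun α hα => by rw [him α hα]; ring
  rw [hQx]
  exact sum_pos' (fun α _ => sq_nonneg _) ⟨α₀, hα₀, by positivity⟩

theorem QuadraticForm.neg_of_forall_re_eq_zero (hinj : ∀ x, (∀ α ∈ R, ev α x = 0) → x = 0)
    (hQ : ∀ x, (Q x : ℂ) = ∑ α ∈ R, ev α x ^ 2) {x : V} (hx : x ≠ 0)
    (hre : ∀ α ∈ R, (ev α x).re = 0) : Q x < 0 := by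
  obtain ⟨α₀, hα₀, hne⟩ : ∃ α ∈ R, ev α x ≠ 0 := by
    by_contra! h
    exact hx (hinj x h)
  have him : (ev α₀ x).im ≠ 0 := fun h => hne (Complex.ext (hre α₀ hα₀) h)
  have hQx : Q x = -∑ α ∈ R, (ev α x).im ^ 2 := by
    rw [eq_sum_re_sq_sub_im_sq hQ, ← sum_neg_distrib]
    exact sum_congr rfl fun α hα => by rw [hre α hα]; ring
  rw [hQx, neg_neg_iff_pos]
  exact sum_pos' (fun α _ => sq_nonneg _) ⟨α₀, hα₀, by positivity⟩

/-- `Q` is positive definite where the `ev α` with `0 < α.im` are real, and negative definite where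
the `ev α` with `0 ≤ α.im` are imaginary. The codimensions of these two subspaces add up to
`#R = dim V`, which forces equality in both lower bounds `sigPos Q ≥ dim P`, `sigNeg Q ≥ dim N`. -/
theorem QuadraticForm.sigPos_eq_and_sigNeg_eq_of_conj_sum_sq [FiniteDimensional ℝ V]
    (hR : ∀ α ∈ R, conj α ∈ R) (hev : ∀ α x, ev (conj α) x = conj (ev α x))
    (hinj : ∀ x, (∀ α ∈ R, ev α x = 0) → x = 0) (hdim : finrank ℝ V = #R)
    (hQ : ∀ x, (Q x : ℂ) = ∑ α ∈ R, ev α x ^ 2) :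
    sigPos Q = #{α ∈ R | 0 ≤ α.im} ∧ sigNeg Q = #{α ∈ R | 0 < α.im} := by
  let TP := LinearMap.pi fun α : {α // α ∈ R.filter (fun α : ℂ => 0 < α.im)} =>
    Complex.imLm ∘ₗ ev α
  let TN := LinearMap.pi fun α : {α // α ∈ R.filter (fun α : ℂ => 0 ≤ α.im)} =>
    Complex.reLm ∘ₗ ev α
  have hP : (Q.restrict (LinearMap.ker TP)).PosDef := by
    rintro ⟨x, hxP⟩ hx
    exact pos_of_forall_im_eq_zero hinj hQ (by simpa using hx) <|
      forall_im_eq_zero_of_forall_im_pos hR hev fun α hα hpos =>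
        congrFun (LinearMap.mem_ker.1 hxP) ⟨α, mem_filter.2 ⟨hα, hpos⟩⟩
  have hN : ((-Q).restrict (LinearMap.ker TN)).PosDef := by
    rintro ⟨x, hxN⟩ hx
    exact neg_pos.2 <| neg_of_forall_re_eq_zero hinj hQ (by simpa using hx) <|
      forall_re_eq_zero_of_forall_im_nonneg hR hev fun α hα hnonneg =>
        congrFun (LinearMap.mem_ker.1 hxN) ⟨α, mem_filter.2 ⟨hα, hnonneg⟩⟩
  have hPdim := TP.finrank_le_finrank_ker_add_card
  have hNdim := TN.finrank_le_finrank_ker_add_card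
  rw [Fintype.card_coe] at hPdim hNdim
  have := le_sigPos_of_posDef Q hP
  have := le_sigNeg_of_negDef Q hN
  have := QuadraticForm.sigPos_add_sigNeg_add_radical (Q := Q)
  have := card_filter_im_nonneg_add_card_filter_im_pos hR
  omega

end ConjSymmetric

section Eigenvalues

variable {n : Type*} [Fintype n] [DecidableEq n] {A : Matrix n n ℝ}

theorem Matrix.IsHermitian.toQuadraticForm'_equivalent_weightedSumSquares (hA : A.IsHermitian) :
    A.toQuadraticForm'.Equivalent (weightedSumSquares ℝ hA.eigenvalues) := by
  set U : Matrix n n ℝ := (hA.eigenvectorUnitary : Matrix n n ℝ)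
  refine ⟨{ UnitaryGroup.toLinearEquiv (star hA.eigenvectorUnitary) with map_app' := fun x => ?_ }⟩
  have hA' : A = U * diagonal hA.eigenvalues * star U := by
    conv_lhs => rw [hA.spectral_theorem, Unitary.conjStarAlgAut_apply]
    rfl
  have hUt : Uᵀ = star U := (conjTranspose_eq_transpose_of_trivial U).symm
  simp only [Matrix.toQuadraticForm', LinearMap.BilinMap.toQuadraticMap_apply,
    toLinearMap₂'_apply', weightedSumSquares_apply]
  change ∑ i, hA.eigenvalues i • ((star U *ᵥ x) i * (star U *ᵥ x) i) = x ⬝ᵥ A *ᵥ x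
  rw [congrArg (fun M => x ⬝ᵥ M *ᵥ x) hA', ← mulVec_mulVec, ← mulVec_mulVec, dotProduct_mulVec,
    ← mulVec_transpose, hUt]
  simp only [dotProduct, mulVec_diagonal, smul_eq_mul]
  exact sum_congr rfl fun i _ => by ring

theorem Matrix.IsHermitian.sigPos_toQuadraticForm' (hA : A.IsHermitian) :
    sigPos A.toQuadraticForm' = #{i | 0 < hA.eigenvalues i} := by
  rw [QuadraticForm.sigPos_of_equiv_weightedSumSquares
    hA.toQuadraticForm'_equivalent_weightedSumSquares]
  simp [← Set.ncard_coe_finset]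

theorem Matrix.IsHermitian.sigNeg_toQuadraticForm' (hA : A.IsHermitian) :
    sigNeg A.toQuadraticForm' = #{i | hA.eigenvalues i < 0} := by
  rw [QuadraticForm.sigNeg_of_equiv_weightedSumSquares
    hA.toQuadraticForm'_equivalent_weightedSumSquares]
  simp [← Set.ncard_coe_finset]

theorem Matrix.IsHermitian.rank_eq_card_pos_add_card_neg (hA : A.IsHermitian) :
    A.rank = #{i | 0 < hA.eigenvalues i} + #{i | hA.eigenvalues i < 0} := by
  rw [hA.rank_eq_card_non_zero_eigs, Fintype.card_subtype,
    ← card_union_of_disjoint (disjoint_filter.2 fun i _ h => h.not_gt), ← filter_or]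
  simp only [ne_iff_lt_or_gt, or_comm]

end Eigenvalues

noncomputable def evalCoeffs (n : ℕ) (α : ℂ) : (Fin n → ℝ) →ₗ[ℝ] ℂ :=
  Fintype.linearCombination ℝ fun i : Fin n => α ^ (i : ℕ)

theorem evalCoeffs_apply {n : ℕ} (α : ℂ) (x : Fin n → ℝ) :
    evalCoeffs n α x = ∑ i, (x i : ℂ) * α ^ (i : ℕ) := by
  simp [evalCoeffs, Fintype.linearCombination_apply, Complex.real_smul]

theorem evalCoeffs_conj {n : ℕ} (α : ℂ) (x : Fin n → ℝ) :
    evalCoeffs n (conj α) x = conj (evalCoeffs n α x) := by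
  simp [evalCoeffs_apply, map_sum]

theorem eq_zero_of_forall_mem_evalCoeffs_eq_zero {n : ℕ} {s : Finset ℂ} (hs : n ≤ #s)
    {x : Fin n → ℝ} (h : ∀ α ∈ s, evalCoeffs n α x = 0) : x = 0 := by
  let e : Fin n ↪ s := (Fin.castLEEmb hs).trans s.equivFin.symm.toEmbedding
  have := eq_zero_of_forall_index_sum_mul_pow_eq_zero (f := fun i => (e i : ℂ))
    (v := fun i => (x i : ℂ)) (Subtype.val_injective.comp e.injective)
    fun j => (evalCoeffs_apply _ x).symm.trans (h _ (e j).2)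
  exact funext fun i => Complex.ofReal_injective (congrFun this i)

theorem Matrix.ofReal_toQuadraticForm'_eq_sum_sq {n : ℕ} {H : Matrix (Fin n) (Fin n) ℝ}
    {R : Finset ℂ} (hH : ∀ i j, (H i j : ℂ) = ∑ α ∈ R, α ^ (i + j : ℕ)) (x : Fin n → ℝ) :
    (H.toQuadraticForm' x : ℂ) = ∑ α ∈ R, evalCoeffs n α x ^ 2 := by
  simp only [Matrix.toQuadraticForm', LinearMap.BilinMap.toQuadraticMap_apply,
    toLinearMap₂'_apply', dotProduct, mulVec, evalCoeffs_apply, _root_.sq, sum_mul_sum]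
  push_cast
  simp only [hH, Finset.mul_sum, Finset.sum_mul]
  rw [← sum_congr rfl fun i _ => sum_comm, sum_comm]
  exact sum_congr rfl fun α _ => sum_congr rfl fun i _ => sum_congr rfl fun j _ => by ring

theorem Polynomial.conj_mem_aroots_complex {f : ℝ[X]} {α : ℂ} (hα : α ∈ f.aroots ℂ) :
    conj α ∈ f.aroots ℂ := by
  rw [mem_aroots] at hα ⊢
  refine ⟨hα.1, ?_⟩
  rw [← Complex.conjAe_coe, aeval_algHom_apply, hα.2, map_zero]

theorem Polynomial.card_roots_toFinset_eq_card_filter_im_eq_zero (f : ℝ[X]) :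
    #f.roots.toFinset = #{α ∈ (f.aroots ℂ).toFinset | α.im = 0} := by
  rw [← card_image_of_injective _ Complex.ofReal_injective]
  congr 1
  ext α
  simp only [mem_image, Multiset.mem_toFinset, mem_filter, mem_roots', IsRoot.def,
    Polynomial.map_ne_zero_iff (algebraMap ℝ ℂ).injective]
  constructor
  · rintro ⟨x, ⟨hf, hx⟩, rfl⟩
    refine ⟨⟨hf, ?_⟩, Complex.ofReal_im x⟩
    rw [← Complex.coe_algebraMap, eval_map, eval₂_at_apply, hx, map_zero]
  · rintro ⟨⟨hf, hα⟩, him⟩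
    have hre : α = (α.re : ℂ) := Complex.ext rfl (by simpa using him)
    refine ⟨α.re, ⟨hf, ?_⟩, hre.symm⟩
    rw [hre, ← Complex.coe_algebraMap, eval_map, eval₂_at_apply] at hα
    exact (algebraMap ℝ ℂ).injective (hα.trans (map_zero _).symm)

theorem hermite_form_rank_and_signature_univariate
    (f : Polynomial ℝ) (hf : f ≠ 0) (hsf : Squarefree f)
    (H : Matrix (Fin (AdjoinRoot.powerBasis hf).dim) (Fin (AdjoinRoot.powerBasis hf).dim) ℝ)
    (hH : ∀ i j, H i j = LinearMap.trace ℝ (AdjoinRoot f)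
      (LinearMap.mulLeft ℝ
        ((AdjoinRoot.powerBasis hf).basis i * (AdjoinRoot.powerBasis hf).basis j))) :
    H.rank = (f.map (algebraMap ℝ ℂ)).roots.toFinset.card ∧
    H.rank = f.natDegree ∧
    ∃ hsymm : H.IsHermitian,
      ((Finset.univ.filter fun i => 0 < hsymm.eigenvalues i).card : ℤ) -
          ((Finset.univ.filter fun i => hsymm.eigenvalues i < 0).card : ℤ) =
        (f.roots.toFinset.card : ℤ) := by
  set R := (f.aroots ℂ).toFinset
  have hsep : f.Separable := PerfectField.separable_iff_squarefree.2 hsf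
  have hdeg : #R = f.natDegree := card_aroots_toFinset_eq_natDegree hsep (IsAlgClosed.splits _)
  have hdim : (AdjoinRoot.powerBasis hf).dim = #R := (AdjoinRoot.powerBasis_dim hf).trans hdeg.symm
  have hH_pow i j : (H i j : ℂ) = ∑ α ∈ R, α ^ (i + j : ℕ) := by
    rw [hH, PowerBasis.basis_eq_pow, PowerBasis.basis_eq_pow, ← pow_add, AdjoinRoot.powerBasis_gen]
    exact AdjoinRoot.algebraMap_trace_root_pow hf hsep (IsAlgClosed.splits _) _
  have hsymm : H.IsHermitian := by
    ext i j
    simp only [conjTranspose_apply, star_trivial, hH, mul_comm]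
  have hR : ∀ α ∈ R, conj α ∈ R := fun α hα =>
    Multiset.mem_toFinset.2 (conj_mem_aroots_complex (Multiset.mem_toFinset.1 hα))
  obtain ⟨hpos, hneg⟩ := QuadraticForm.sigPos_eq_and_sigNeg_eq_of_conj_sum_sq (ev := evalCoeffs _)
    hR evalCoeffs_conj (fun x => eq_zero_of_forall_mem_evalCoeffs_eq_zero hdim.le)
    (by rw [Module.finrank_fin_fun, hdim]) (ofReal_toQuadraticForm'_eq_sum_sq hH_pow)
  rw [hsymm.sigPos_toQuadraticForm'] at hpos
  rw [hsymm.sigNeg_toQuadraticForm'] at hneg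
  have hrank : H.rank = #R := by
    rw [hsymm.rank_eq_card_pos_add_card_neg, hpos, hneg,
      card_filter_im_nonneg_add_card_filter_im_pos hR]
  refine ⟨hrank, hrank.trans hdeg, hsymm, ?_⟩
  rw [hpos, hneg, card_filter_im_nonneg_eq_card_filter_im_eq_zero_add,
    card_roots_toFinset_eq_card_filter_im_eq_zero]
  push_cast
  ring
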